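/- Let D : [0,t] → Sym⁺(N) be a continuous map into symmetric positive semidefinite matrices and Z : [0,t] → SO(N) be measurable. Then det(∫₀ᵗ Z_sᵀ D_s Z_s ds)^{1/N} ≥ ∫₀ᵗ det(D_s)^{1/N} ds. In particular, if det(D_s) ≥ c·s for all s ∈ [0,t] with c > 0, then det(∫₀ᵗ Z_sᵀ D_s Z_s ds) ≥ (c^{1/N} N t^{1+1/N}/(N+1))^N. -/

import Mathlib

open Matrix MeasureTheory

private lemma aux_trace_eq_sum_eigenvalues {N : ℕ} {C : Matrix (Fin N) (Fin N) ℝ}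
    (hC : C.IsHermitian) : C.trace = ∑ i, hC.eigenvalues i := by
  conv_lhs => rw [hC.spectral_theorem]
  rw [Unitary.conjStarAlgAut_apply, Matrix.trace_mul_cycle,
    (Matrix.mem_unitaryGroup_iff').mp (hC.eigenvectorUnitary).2, Matrix.one_mul]
  simp [Matrix.trace_diagonal]

private lemma aux_psd_amgm {N : ℕ} (hN : 1 ≤ N) {C : Matrix (Fin N) (Fin N) ℝ}
    (hC : C.PosSemidef) : (N : ℝ) * C.det ^ ((N : ℝ)⁻¹) ≤ C.trace := by
  have hNpos : (0:ℝ) < N := by exact_mod_cast hN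
  have htr : C.trace = ∑ i, hC.1.eigenvalues i := aux_trace_eq_sum_eigenvalues hC.1
  have hdet : C.det = ∏ i, hC.1.eigenvalues i := by
    simpa using hC.1.det_eq_prod_eigenvalues
  have hev : ∀ i, 0 ≤ hC.1.eigenvalues i := hC.eigenvalues_nonneg
  have h := Real.geom_mean_le_arith_mean_weighted Finset.univ (fun _ => (N:ℝ)⁻¹)
      (fun i => hC.1.eigenvalues i) (fun i _ => by positivity)
      (by simp [Finset.card_univ]; field_simp) (fun i _ => hev i)
  rw [Real.finset_prod_rpow _ _ (fun i _ => hev i)] at h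
  rw [htr, hdet]
  calc (N:ℝ) * (∏ i, hC.1.eigenvalues i) ^ ((N:ℝ)⁻¹)
      ≤ (N:ℝ) * ∑ i, (N:ℝ)⁻¹ * hC.1.eigenvalues i := by
        exact mul_le_mul_of_nonneg_left h hNpos.le
    _ = ∑ i, hC.1.eigenvalues i := by
        rw [← Finset.mul_sum, ← mul_assoc, mul_inv_cancel₀ hNpos.ne']
        ring

open scoped MatrixOrder in
private lemma aux_trace_form {N : ℕ} (hN : 1 ≤ N) {a B : Matrix (Fin N) (Fin N) ℝ}
    (ha : a.PosSemidef) (hadet : a.det = 1) (hB : B.PosSemidef) :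
    (N : ℝ) * B.det ^ ((N : ℝ)⁻¹) ≤ (a * B).trace := by
  have hs : CFC.sqrt B * CFC.sqrt B = B := CFC.sqrt_mul_sqrt_self B hB.nonneg
  have hsherm : (CFC.sqrt B)ᴴ = CFC.sqrt B := (CFC.sqrt_nonneg B).posSemidef.1
  have hC : (CFC.sqrt B * a * CFC.sqrt B).PosSemidef := by
    have := ha.mul_mul_conjTranspose_same (CFC.sqrt B)
    rwa [hsherm] at this
  have hCtrace : (CFC.sqrt B * a * CFC.sqrt B).trace = (a * B).trace := by
    rw [Matrix.trace_mul_cycle, hs, Matrix.trace_mul_comm]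
  have hCdet : (CFC.sqrt B * a * CFC.sqrt B).det = B.det := by
    have hBd : B.det = (CFC.sqrt B).det * (CFC.sqrt B).det := by rw [← Matrix.det_mul, hs]
    rw [Matrix.det_mul, Matrix.det_mul, hadet, hBd]; ring
  have := aux_psd_amgm hN hC
  rwa [hCdet, hCtrace] at this

private lemma aux_psd_smul {N : ℕ} {A : Matrix (Fin N) (Fin N) ℝ} (hA : A.PosSemidef)
    {c : ℝ} (hc : 0 ≤ c) : (c • A).PosSemidef := by
  refine Matrix.PosSemidef.of_dotProduct_mulVec_nonneg ?_ ?_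
  · show (c • A)ᴴ = c • A
    rw [Matrix.conjTranspose_smul, hA.1.eq, star_trivial]
  · intro x
    rw [Matrix.smul_mulVec, dotProduct_smul]
    exact mul_nonneg hc (hA.dotProduct_mulVec_nonneg x)

private lemma aux_psd_trace_nonneg {N : ℕ} {A : Matrix (Fin N) (Fin N) ℝ}
    (hA : A.PosSemidef) : 0 ≤ A.trace := by
  rw [Matrix.trace]
  apply Finset.sum_nonneg
  intro i _
  have := hA.dotProduct_mulVec_nonneg (Pi.single i 1)
  simpa [single_dotProduct, Matrix.mulVec_single] using this

private lemma aux_psd_det_nonneg {N : ℕ} {A : Matrix (Fin N) (Fin N) ℝ}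
    (hA : A.PosSemidef) : 0 ≤ A.det := by
  rw [hA.1.det_eq_prod_eigenvalues]
  apply Finset.prod_nonneg
  intro i _
  simpa using hA.eigenvalues_nonneg i

private lemma aux_quad_expand {N : ℕ} (A : Matrix (Fin N) (Fin N) ℝ) (x : Fin N → ℝ) :
    star x ⬝ᵥ A.mulVec x = ∑ i, ∑ j, x i * A i j * x j := by
  simp [dotProduct, Matrix.mulVec, Finset.mul_sum, mul_assoc]

private lemma aux_trace_mul_expand {N : ℕ} (a A : Matrix (Fin N) (Fin N) ℝ) :
    (a * A).trace = ∑ i, ∑ j, a i j * A j i := by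
  simp [Matrix.trace, Matrix.diag, Matrix.mul_apply]

/-- If `D : [0,t] → Sym⁺(N)` is continuous and `Z : [0,t] → SO(N)` is measurable, then
`det(∫₀ᵗ Zₛᵀ Dₛ Zₛ ds)^{1/N} ≥ ∫₀ᵗ det(Dₛ)^{1/N} ds`; and if moreover `det(Dₛ) ≥ c s` with
`c > 0`, then `det(∫₀ᵗ Zₛᵀ Dₛ Zₛ ds) ≥ (c^{1/N} N t^{1+1/N}/(N+1))^N`. -/
theorem stmt14 (N : ℕ) (hN : 1 ≤ N) (t : ℝ) (ht : 0 < t)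
    (D Z : ℝ → Matrix (Fin N) (Fin N) ℝ)
    (hD : ContinuousOn D (Set.Icc 0 t))
    (hDpos : ∀ s ∈ Set.Icc (0 : ℝ) t, (D s).PosSemidef)
    (hZmeas : ∀ i j, Measurable fun s => Z s i j)
    (hZ : ∀ s ∈ Set.Icc (0 : ℝ) t, Z s ∈ Matrix.specialOrthogonalGroup (Fin N) ℝ)
    (hintegrable : ∀ i j,
      IntegrableOn (fun s => ((Z s)ᵀ * D s * Z s) i j) (Set.Icc 0 t))
    (M : Matrix (Fin N) (Fin N) ℝ)
    (hM : ∀ i j, M i j = ∫ s in Set.Icc (0 : ℝ) t, ((Z s)ᵀ * D s * Z s) i j) :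
    (∫ s in Set.Icc (0 : ℝ) t, (D s).det ^ ((N : ℝ)⁻¹)) ≤ M.det ^ ((N : ℝ)⁻¹) ∧
    ∀ c : ℝ, 0 < c → (∀ s ∈ Set.Icc (0 : ℝ) t, c * s ≤ (D s).det) →
      (c ^ ((N : ℝ)⁻¹) * N * t ^ (1 + (N : ℝ)⁻¹) / (N + 1)) ^ N ≤ M.det := by
  have hNR : (0:ℝ) < N := by exact_mod_cast hN
  have hNne : N ≠ 0 := by omega
  set B : ℝ → Matrix (Fin N) (Fin N) ℝ := fun s => (Z s)ᵀ * D s * Z s with hBdef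
  -- basic facts about B
  have hZT : ∀ s ∈ Set.Icc (0:ℝ) t, (Z s)ᵀ = (Z s)ᴴ := by
    intro s hs
    ext i j
    simp [Matrix.conjTranspose_apply]
  have hBpsd : ∀ s ∈ Set.Icc (0:ℝ) t, (B s).PosSemidef := by
    intro s hs
    have h1 := (hDpos s hs).conjTranspose_mul_mul_same (Z s)
    rw [hBdef]
    simpa [← hZT s hs] using h1
  have hdetZ : ∀ s ∈ Set.Icc (0:ℝ) t, (Z s).det = 1 := fun s hs =>
    ((Matrix.mem_specialOrthogonalGroup_iff).mp (hZ s hs)).2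
  have hdetB : ∀ s ∈ Set.Icc (0:ℝ) t, (B s).det = (D s).det := by
    intro s hs
    simp [hBdef, Matrix.det_mul, Matrix.det_transpose, hdetZ s hs]
  -- continuity and integrability of the rpow determinant
  have hrpow_cont : Continuous fun x : ℝ => x ^ ((N:ℝ)⁻¹) := by
    apply continuous_iff_continuousAt.mpr
    intro x
    exact Real.continuousAt_rpow_const x _ (Or.inr (by positivity))
  have hf_cont : ContinuousOn (fun s => (D s).det ^ ((N:ℝ)⁻¹)) (Set.Icc 0 t) :=
    hrpow_cont.comp_continuousOn ((continuous_id.matrix_det).comp_continuousOn hD)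
  have hf_int : IntegrableOn (fun s => (D s).det ^ ((N:ℝ)⁻¹)) (Set.Icc 0 t) :=
    hf_cont.integrableOn_Icc
  -- B is symmetric on the interval
  have hBsym : ∀ s ∈ Set.Icc (0:ℝ) t, ∀ i j, B s i j = B s j i := by
    intro s hs i j
    have h := (hBpsd s hs).1
    have h2 := congrFun (congrFun h i) j
    simp only [Matrix.conjTranspose_apply, star_trivial] at h2
    exact h2.symm
  -- M is positive semidefinite
  have hMherm : M.IsHermitian := by
    ext i j
    rw [Matrix.conjTranspose_apply, star_trivial, hM i j, hM j i]
    exact setIntegral_congr_fun measurableSet_Icc (fun s hs => hBsym s hs j i)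
  have hMquad : ∀ x : Fin N → ℝ, 0 ≤ star x ⬝ᵥ M.mulVec x := by
    intro x
    rw [aux_quad_expand]
    have hterm : ∀ i j : Fin N, x i * M i j * x j
        = ∫ s in Set.Icc (0:ℝ) t, x i * B s i j * x j := by
      intro i j
      rw [hM i j]
      rw [integral_mul_const, integral_const_mul]
    have hsum : ∑ i, ∑ j, x i * M i j * x j
        = ∫ s in Set.Icc (0:ℝ) t, ∑ i, ∑ j, x i * B s i j * x j := by
      rw [integral_finset_sum]
      · apply Finset.sum_congr rfl
        intro i _
        rw [integral_finset_sum]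
        · exact Finset.sum_congr rfl fun j _ => hterm i j
        · intro j _
          exact (((hintegrable i j).const_mul (x i)).mul_const (x j))
      · intro i _
        apply integrable_finset_sum
        intro j _
        exact (((hintegrable i j).const_mul (x i)).mul_const (x j))
    rw [hsum]
    apply setIntegral_nonneg measurableSet_Icc
    intro s hs
    rw [← aux_quad_expand]
    exact (hBpsd s hs).dotProduct_mulVec_nonneg x
  have hMpsd : M.PosSemidef := Matrix.PosSemidef.of_dotProduct_mulVec_nonneg hMherm hMquad
  -- the key estimate with regularization
  have key : ∀ ε : ℝ, 0 < ε →
      (∫ s in Set.Icc (0:ℝ) t, (D s).det ^ ((N:ℝ)⁻¹))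
        ≤ (M + ε • 1).det ^ ((N:ℝ)⁻¹) := by
    intro ε hε
    have hone : (ε • (1 : Matrix (Fin N) (Fin N) ℝ)).PosDef := by
      rw [Matrix.smul_one_eq_diagonal]
      exact Matrix.posDef_diagonal_iff.mpr fun _ => hε
    have hMε : (M + ε • 1).PosDef := Matrix.PosDef.posSemidef_add hMpsd hone
    have hdet_pos : 0 < (M + ε • 1).det := hMε.det_pos
    set a : Matrix (Fin N) (Fin N) ℝ := ((M + ε • 1).det ^ ((N:ℝ)⁻¹)) • (M + ε • 1)⁻¹ with hadef
    have hainv : ((M + ε • 1)⁻¹).PosDef := hMε.inv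
    have ha : a.PosSemidef := aux_psd_smul hainv.posSemidef (by positivity)
    have hadet : a.det = 1 := by
      rw [hadef, Matrix.det_smul, Fintype.card_fin,
        Real.rpow_inv_natCast_pow hdet_pos.le hNne,
        Matrix.det_nonsing_inv, Ring.inverse_eq_inv']
      exact mul_inv_cancel₀ hdet_pos.ne'
    -- pointwise bound
    have hpt : ∀ s ∈ Set.Icc (0:ℝ) t,
        (N:ℝ) * (D s).det ^ ((N:ℝ)⁻¹) ≤ (a * B s).trace := by
      intro s hs
      have := aux_trace_form hN ha hadet (hBpsd s hs)
      rwa [hdetB s hs] at this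
    -- integrability of the trace
    have htr_eq : (fun s => (a * B s).trace) = fun s => ∑ i, ∑ j, a i j * B s j i :=
      funext fun s => aux_trace_mul_expand a (B s)
    have htr_int : IntegrableOn (fun s => (a * B s).trace) (Set.Icc 0 t) := by
      rw [htr_eq]
      apply integrable_finset_sum
      intro i _
      apply integrable_finset_sum
      intro j _
      exact (hintegrable j i).const_mul _
    -- integral comparison
    have h1 : (N:ℝ) * (∫ s in Set.Icc (0:ℝ) t, (D s).det ^ ((N:ℝ)⁻¹))
        ≤ ∫ s in Set.Icc (0:ℝ) t, (a * B s).trace := by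
      rw [← integral_const_mul]
      exact setIntegral_mono_on (hf_int.const_mul _) htr_int measurableSet_Icc hpt
    -- the integral of the trace equals the trace of a * M
    have h2 : (∫ s in Set.Icc (0:ℝ) t, (a * B s).trace) = (a * M).trace := by
      rw [htr_eq, aux_trace_mul_expand]
      rw [integral_finset_sum]
      · apply Finset.sum_congr rfl
        intro i _
        rw [integral_finset_sum]
        · apply Finset.sum_congr rfl
          intro j _
          rw [integral_const_mul, hM j i]
        · intro j _
          exact (hintegrable j i).const_mul _
      · intro i _
        apply integrable_finset_sum
        intro j _
        exact (hintegrable j i).const_mul _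
    have h3 : (a * M).trace ≤ (a * (M + ε • 1)).trace := by
      have hexp : a * (M + ε • 1) = a * M + ε • a := by
        rw [Matrix.mul_add, Matrix.mul_smul, Matrix.mul_one]
      rw [hexp, Matrix.trace_add, Matrix.trace_smul, smul_eq_mul]
      nlinarith [aux_psd_trace_nonneg ha, hε.le]
    have h4 : (a * (M + ε • 1)).trace = (N:ℝ) * ((M + ε • 1).det ^ ((N:ℝ)⁻¹)) := by
      rw [hadef, Matrix.smul_mul, Matrix.nonsing_inv_mul _ hdet_pos.ne'.isUnit,
        Matrix.trace_smul, Matrix.trace_one, Fintype.card_fin, smul_eq_mul]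
      ring
    have := (h1.trans (h2.le)).trans (h3.trans_eq h4)
    exact le_of_mul_le_mul_left this hNR
  -- pass to the limit ε → 0⁺
  have part1 : (∫ s in Set.Icc (0:ℝ) t, (D s).det ^ ((N:ℝ)⁻¹)) ≤ M.det ^ ((N:ℝ)⁻¹) := by
    have hc1 : Continuous fun ε : ℝ => (M + ε • (1 : Matrix (Fin N) (Fin N) ℝ)).det := by
      apply Continuous.matrix_det
      fun_prop
    have hc2 : ContinuousAt (fun x : ℝ => x ^ ((N:ℝ)⁻¹)) M.det :=
      Real.continuousAt_rpow_const _ _ (Or.inr (by positivity))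
    have hval : (M + (0:ℝ) • (1 : Matrix (Fin N) (Fin N) ℝ)).det = M.det := by
      simp
    have hlim : Filter.Tendsto (fun ε : ℝ => (M + ε • (1 : Matrix (Fin N) (Fin N) ℝ)).det ^ ((N:ℝ)⁻¹))
        (nhdsWithin 0 (Set.Ioi 0)) (nhds (M.det ^ ((N:ℝ)⁻¹))) := by
      have hcc : ContinuousAt
          (fun ε : ℝ => (M + ε • (1 : Matrix (Fin N) (Fin N) ℝ)).det ^ ((N:ℝ)⁻¹)) 0 :=
        hc1.continuousAt.rpow_const (Or.inr (by positivity))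
      have h0 := hcc.tendsto
      simp only [zero_smul, add_zero] at h0
      exact h0.mono_left nhdsWithin_le_nhds
    exact ge_of_tendsto hlim (Filter.eventually_of_mem self_mem_nhdsWithin
      (fun ε hε => key ε hε))
  refine ⟨part1, ?_⟩
  -- Part 2
  intro c hc hcs
  have hg_cont : Continuous fun s : ℝ => (c * s) ^ ((N:ℝ)⁻¹) :=
    hrpow_cont.comp (continuous_const.mul continuous_id)
  have hg_int : IntegrableOn (fun s : ℝ => (c * s) ^ ((N:ℝ)⁻¹)) (Set.Icc 0 t) :=
    hg_cont.continuousOn.integrableOn_Icc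
  have hmono : (∫ s in Set.Icc (0:ℝ) t, (c * s) ^ ((N:ℝ)⁻¹))
      ≤ ∫ s in Set.Icc (0:ℝ) t, (D s).det ^ ((N:ℝ)⁻¹) := by
    apply setIntegral_mono_on hg_int hf_int measurableSet_Icc
    intro s hs
    exact Real.rpow_le_rpow (mul_nonneg hc.le hs.1) (hcs s hs) (by positivity)
  -- compute the left integral
  have hIoc : (∫ s in Set.Icc (0:ℝ) t, (c * s) ^ ((N:ℝ)⁻¹))
      = ∫ s in Set.Ioc (0:ℝ) t, (c * s) ^ ((N:ℝ)⁻¹) := integral_Icc_eq_integral_Ioc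
  have hsplit : (∫ s in Set.Ioc (0:ℝ) t, (c * s) ^ ((N:ℝ)⁻¹))
      = ∫ s in Set.Ioc (0:ℝ) t, c ^ ((N:ℝ)⁻¹) * s ^ ((N:ℝ)⁻¹) := by
    apply setIntegral_congr_fun measurableSet_Ioc
    intro s hs
    exact Real.mul_rpow hc.le hs.1.le
  have hval2 : (∫ s in Set.Ioc (0:ℝ) t, s ^ ((N:ℝ)⁻¹))
      = t ^ ((N:ℝ)⁻¹ + 1) / ((N:ℝ)⁻¹ + 1) := by
    rw [← intervalIntegral.integral_of_le ht.le,
      integral_rpow (Or.inl (by have := inv_nonneg.mpr hNR.le; linarith)),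
      Real.zero_rpow (by positivity)]
    ring
  have hX : (∫ s in Set.Icc (0:ℝ) t, (c * s) ^ ((N:ℝ)⁻¹))
      = c ^ ((N:ℝ)⁻¹) * (N:ℝ) * t ^ (1 + (N:ℝ)⁻¹) / ((N:ℝ) + 1) := by
    rw [hIoc, hsplit, integral_const_mul, hval2, add_comm (1:ℝ) ((N:ℝ)⁻¹)]
    have hN1 : (N:ℝ) + 1 ≠ 0 := by positivity
    field_simp
    ring
  set Y := c ^ ((N:ℝ)⁻¹) * (N:ℝ) * t ^ (1 + (N:ℝ)⁻¹) / ((N:ℝ) + 1) with hY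
  have hY_nonneg : 0 ≤ Y := by
    rw [hY]
    have : (0:ℝ) ≤ t ^ (1 + (N:ℝ)⁻¹) := Real.rpow_nonneg ht.le _
    positivity
  have hchain : Y ≤ M.det ^ ((N:ℝ)⁻¹) := by
    rw [← hX]
    exact hmono.trans part1
  calc Y ^ N ≤ (M.det ^ ((N:ℝ)⁻¹)) ^ N := pow_le_pow_left₀ hY_nonneg hchain N
    _ = M.det := Real.rpow_inv_natCast_pow (aux_psd_det_nonneg hMpsd) hNne
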